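/- arXiv:2011.08287 — 5 statements merged into one kernel-verified Lean document; each statement's English description precedes it below -/
import Mathlib

section
/- Let C be the Clifford algebra of a nondegenerate quadratic form on an n-dimensional space with n even. Then the set of invertible elements T such that T·C^n·T^{-1} ⊆ C^n (where C^n is the one-dimensional subspace of grade n) equals the union of the invertible even elements and the invertible odd elements. -/
/-!
Let `ω = e_1 ⋯ e_n`. For `n` even every generator anticommutes with `ω`, so
`x ω = ω x̂` for the grade involution `x ↦ x̂`. Since `C^n = ℝ ω` and `ω` is invertible,
`T ω T⁻¹ ∈ C^n` means `T̂ = c T` for a scalar `c`. Writing `T = T₀ + T₁`, the element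
`(1 - c) T₀ = (1 + c) T₁` is both even and odd, hence zero, which forces `T₀ = 0` or `T₁ = 0`.
-/

open CliffordAlgebra

noncomputable section

variable {n : ℕ} (Q : QuadraticForm ℝ (Fin n → ℝ))

/-- The standard generators `e_a` of the Clifford algebra. -/
def egen (a : Fin n) : CliffordAlgebra Q := ι Q (Pi.single a 1)

/-- The ordered product of generators indexed by a finite set. -/
def eProd (s : Finset (Fin n)) : CliffordAlgebra Q :=
  ((s.sort (· ≤ ·)).map (egen Q)).prod

/-- The grade-`k` subspace `C^k`, spanned by the products of `k` distinct generators. -/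
def gradeSubmodule (k : ℕ) : Submodule ℝ (CliffordAlgebra Q) :=
  Submodule.span ℝ {x | ∃ s : Finset (Fin n), s.card = k ∧ x = eProd Q s}

/-- The set `Z^× (C^{×(0)} ∪ C^{×(1)})` : invertible central elements times
invertible even or odd elements. -/
def Pset : Set (CliffordAlgebra Q) :=
  {T | ∃ W T₀ : CliffordAlgebra Q,
    W ∈ Subalgebra.center ℝ (CliffordAlgebra Q) ∧ IsUnit W ∧
    (T₀ ∈ evenOdd Q 0 ∨ T₀ ∈ evenOdd Q 1) ∧ IsUnit T₀ ∧ T = W * T₀}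

/-- `Q` is diagonal with entries `±1` in the standard basis (an orthonormal-type basis,
expressing nondegeneracy of `Q`). -/
def DiagQ : Prop :=
  (∀ a, Q (Pi.single a 1) = 1 ∨ Q (Pi.single a 1) = -1) ∧
  (∀ a b : Fin n, a ≠ b → QuadraticMap.polar Q (Pi.single a 1) (Pi.single b 1) = 0)

theorem mem_evenOdd_of_involute_eq_smul {R M : Type*} [Field R] [NeZero (2 : R)]
    [AddCommGroup M] [Module R M] {Q : QuadraticForm R M} {x : CliffordAlgebra Q} {c : R}
    (h : involute x = c • x) : x ∈ evenOdd Q 0 ∨ x ∈ evenOdd Q 1 := by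
  have hx : x ∈ evenOdd Q 0 ⊔ evenOdd Q 1 := (evenOdd_isCompl Q).sup_eq_top ▸ Submodule.mem_top
  obtain ⟨x₀, h₀, x₁, h₁, rfl⟩ := Submodule.mem_sup.1 hx
  rw [map_add, involute_eq_of_mem_even h₀, involute_eq_of_mem_odd h₁] at h
  -- `(1 - c) • x₀ = (1 + c) • x₁` is both even and odd.
  have hmid : (1 - c) • x₀ = (1 + c) • x₁ := by
    linear_combination (norm := module) h
  have hzero : (1 - c) • x₀ = 0 :=
    (Submodule.disjoint_def.1 (evenOdd_isCompl Q).disjoint) _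
      (Submodule.smul_mem _ _ h₀) (hmid ▸ Submodule.smul_mem _ _ h₁)
  rw [hzero, eq_comm] at hmid
  rcases smul_eq_zero.1 hzero with hc | rfl
  · rcases smul_eq_zero.1 hmid with hc' | rfl
    · exact absurd (by linear_combination hc + hc' : (2 : R) = 0) two_ne_zero
    · exact Or.inl (by rwa [add_zero])
  · exact Or.inr (by rwa [zero_add])

theorem exists_involute_eq_smul_iff {R M : Type*} [Field R] [NeZero (2 : R)]
    [AddCommGroup M] [Module R M] {Q : QuadraticForm R M} {x : CliffordAlgebra Q} :
    (∃ c : R, involute x = c • x) ↔ x ∈ evenOdd Q 0 ∨ x ∈ evenOdd Q 1 := by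
  refine ⟨fun ⟨c, h⟩ => mem_evenOdd_of_involute_eq_smul h, ?_⟩
  rintro (h | h)
  · exact ⟨1, by rw [one_smul, involute_eq_of_mem_even h]⟩
  · exact ⟨-1, by rw [neg_one_smul, involute_eq_of_mem_odd h]⟩

variable {Q}

theorem egen_mul_egen_of_ne (hQ : DiagQ Q) {a b : Fin n} (h : a ≠ b) :
    egen Q a * egen Q b = -(egen Q b * egen Q a) := by
  have hswap := ι_mul_ι_add_swap (Q := Q) (Pi.single a 1) (Pi.single b 1)
  rw [hQ.2 a b h, map_zero] at hswap
  exact eq_neg_of_add_eq_zero_left hswap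

theorem egen_mul_prod (hQ : DiagQ Q) (a : Fin n) (l : List (Fin n)) :
    egen Q a * (l.map (egen Q)).prod =
      (-1 : ℝ) ^ (l.length + l.count a) • ((l.map (egen Q)).prod * egen Q a) := by
  induction l with
  | nil => simp
  | cons b l ih =>
    simp only [List.map_cons, List.prod_cons, List.length_cons, List.count_cons, beq_iff_eq]
    by_cases hba : b = a
    · subst hba
      rw [if_pos rfl, mul_assoc, ih, mul_smul_comm, ← mul_assoc, add_add_add_comm,
        one_add_one_eq_two, pow_add _ _ 2, neg_one_sq, mul_one]
    · rw [if_neg hba, ← mul_assoc, egen_mul_egen_of_ne hQ (Ne.symm hba), neg_mul, mul_assoc, ih,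
        mul_smul_comm, ← mul_assoc, add_zero, add_right_comm, pow_succ, mul_neg_one, neg_smul]

theorem eProd_univ_eq_prod_finRange :
    eProd Q Finset.univ = ((List.finRange n).map (egen Q)).prod := by
  rw [eProd, Fin.sort_univ]

theorem egen_mul_eProd_univ (hQ : DiagQ Q) (hn : Even n) (a : Fin n) :
    egen Q a * eProd Q Finset.univ = -(eProd Q Finset.univ * egen Q a) := by
  rw [eProd_univ_eq_prod_finRange, egen_mul_prod hQ, List.length_finRange,
    List.count_eq_one_of_mem (List.nodup_finRange n) (List.mem_finRange a),
    (hn.add_one).neg_one_pow, neg_one_smul]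

theorem ι_mul_eProd_univ (hQ : DiagQ Q) (hn : Even n) (m : Fin n → ℝ) :
    ι Q m * eProd Q Finset.univ = -(eProd Q Finset.univ * ι Q m) := by
  have hbasis := (Pi.basisFun ℝ (Fin n)).ext
    (f₁ := LinearMap.mulRight ℝ (eProd Q Finset.univ) ∘ₗ ι Q)
    (f₂ := -(LinearMap.mulLeft ℝ (eProd Q Finset.univ) ∘ₗ ι Q))
    fun a => by simpa [egen] using egen_mul_eProd_univ hQ hn a
  simpa using LinearMap.congr_fun hbasis m

theorem mul_eProd_univ (hQ : DiagQ Q) (hn : Even n) (x : CliffordAlgebra Q) :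
    x * eProd Q Finset.univ = eProd Q Finset.univ * involute x := by
  induction x using CliffordAlgebra.induction with
  | algebraMap r => rw [AlgHom.commutes]; exact Algebra.commutes r _
  | ι m => rw [involute_ι, mul_neg, ι_mul_eProd_univ hQ hn]
  | mul x y hx hy => rw [mul_assoc, hy, ← mul_assoc, hx, mul_assoc, map_mul]
  | add x y hx hy => rw [add_mul, hx, hy, map_add, mul_add]

theorem isUnit_egen (hQ : DiagQ Q) (a : Fin n) : IsUnit (egen Q a) :=
  isUnit_ι_of_isUnit Q <| by rcases hQ.1 a with h | h <;> norm_num [h]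

theorem isUnit_eProd (hQ : DiagQ Q) (s : Finset (Fin n)) : IsUnit (eProd Q s) :=
  List.prod_isUnit fun _ hx => by
    obtain ⟨a, -, rfl⟩ := List.mem_map.1 hx
    exact isUnit_egen hQ a

theorem gradeSubmodule_self_eq_span :
    gradeSubmodule Q n = Submodule.span ℝ {eProd Q Finset.univ} := by
  rw [gradeSubmodule]
  congr 1
  ext x
  constructor
  · rintro ⟨s, hs, rfl⟩
    rw [Finset.eq_univ_of_card s (hs.trans (Fintype.card_fin n).symm)]
    rfl
  · rintro rfl
    exact ⟨_, Finset.card_fin n, rfl⟩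

theorem conj_eProd_univ_eq_smul_iff (hQ : DiagQ Q) (hn : Even n) (T : (CliffordAlgebra Q)ˣ)
    (c : ℝ) : (T : CliffordAlgebra Q) * eProd Q Finset.univ * ↑T⁻¹ = c • eProd Q Finset.univ ↔
      involute (T : CliffordAlgebra Q) = c • (T : CliffordAlgebra Q) := by
  rw [Units.mul_inv_eq_iff_eq_mul, mul_eProd_univ hQ hn, smul_mul_assoc, ← mul_smul_comm,
    (isUnit_eProd hQ _).mul_right_inj]

/-- For `n` even, `Γ^n = C^{×(0)} ∪ C^{×(1)}`. -/
theorem stmt0 (hQ : DiagQ Q) (hn : Even n) (T : (CliffordAlgebra Q)ˣ) :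
    (∀ U ∈ gradeSubmodule Q n,
        (↑T : CliffordAlgebra Q) * U * (↑T⁻¹ : CliffordAlgebra Q) ∈ gradeSubmodule Q n) ↔
      ((↑T : CliffordAlgebra Q) ∈ evenOdd Q 0 ∨ (↑T : CliffordAlgebra Q) ∈ evenOdd Q 1) := by
  rw [gradeSubmodule_self_eq_span, ← exists_involute_eq_smul_iff]
  simp_rw [← conj_eProd_univ_eq_smul_iff hQ hn T]
  constructor
  · intro h
    obtain ⟨c, hc⟩ := Submodule.mem_span_singleton.1 (h _ (Submodule.mem_span_singleton_self _))
    exact ⟨c, hc.symm⟩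
  · rintro ⟨c, hc⟩ U hU
    obtain ⟨a, rfl⟩ := Submodule.mem_span_singleton.1 hU
    rw [mul_smul_comm, smul_mul_assoc, hc, smul_smul]
    exact Submodule.mem_span_singleton.2 ⟨a * c, rfl⟩
end
end

section
/- Let T be invertible in a Clifford algebra (n ≥ 2 generators, nondegenerate form) such that T U T^{-1} has reverse(TUT^{-1}) = TUT^{-1} for all U fixed by reversion (i.e. T preserves C^{0̄}⊕C^{1̄} under conjugation). Then reverse(T)·T is an invertible element of the center Z. -/
open CliffordAlgebra

noncomputable section

variable {n : ℕ} (Q : QuadraticForm ℝ (Fin n → ℝ))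

/-- `Γ^{0̄1̄} ⊆ A`: if conjugation by `T` preserves the set of elements fixed by
reversion, then `reverse(T) * T` is an invertible central element. -/
theorem stmt9 (hQ : DiagQ Q) (hn : 2 ≤ n) (T : (CliffordAlgebra Q)ˣ)
    (h : ∀ U : CliffordAlgebra Q, reverse (Q := Q) U = U →
      reverse (Q := Q) ((↑T : CliffordAlgebra Q) * U * (↑T⁻¹ : CliffordAlgebra Q)) =
        (↑T : CliffordAlgebra Q) * U * (↑T⁻¹ : CliffordAlgebra Q)) :
    reverse (Q := Q) (↑T : CliffordAlgebra Q) * ↑T ∈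
        Subalgebra.center ℝ (CliffordAlgebra Q) ∧
      IsUnit (reverse (Q := Q) (↑T : CliffordAlgebra Q) * ↑T) := by
  set t : CliffordAlgebra Q := (↑T : CliffordAlgebra Q) with ht
  set ti : CliffordAlgebra Q := (↑T⁻¹ : CliffordAlgebra Q) with hti
  have hti_t : ti * t = 1 := by rw [ht, hti]; exact_mod_cast T.inv_mul
  have ht_ti : t * ti = 1 := by rw [ht, hti]; exact_mod_cast T.mul_inv
  have hrev1 : reverse (Q := Q) t * reverse (Q := Q) ti = 1 := by
    rw [← reverse.map_mul, hti_t, reverse.map_one]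
  have hrev2 : reverse (Q := Q) ti * reverse (Q := Q) t = 1 := by
    rw [← reverse.map_mul, ht_ti, reverse.map_one]
  set S : CliffordAlgebra Q := reverse (Q := Q) t * t with hS
  have key : ∀ v : Fin n → ℝ, S * ι Q v = ι Q v * S := by
    intro v
    have h1 := h (ι Q v) (reverse_ι v)
    rw [reverse.map_mul, reverse.map_mul, reverse_ι] at h1
    have h2 : ι Q v * reverse (Q := Q) t = reverse (Q := Q) t * (t * ι Q v * ti) := by
      rw [← h1, ← mul_assoc, hrev1, one_mul]
    show S * ι Q v = ι Q v * S
    rw [hS, ← mul_assoc, h2]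
    simp only [mul_assoc, hti_t, mul_one]
  constructor
  · rw [Subalgebra.mem_center_iff]
    intro b
    induction b using CliffordAlgebra.induction with
    | algebraMap r => exact Algebra.commutes r S
    | ι v => exact (key v).symm
    | mul x y hx hy => rw [mul_assoc, hy, ← mul_assoc, hx, mul_assoc]
    | add x y hx hy => rw [add_mul, mul_add, hx, hy]
  · refine ⟨⟨S, ti * reverse (Q := Q) ti, ?_, ?_⟩, rfl⟩
    · rw [hS, mul_assoc, ← mul_assoc t ti, ht_ti, one_mul, hrev1]
    · rw [hS, mul_assoc, ← mul_assoc (reverse (Q := Q) ti), hrev2, one_mul, hti_t]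
end
end

section
/- Let T be invertible in a Clifford algebra with n ≥ 4 generators and nondegenerate form, such that conjugation by T preserves the subspace C^{0̄}⊕C^{3̄} (elements fixed by Clifford conjugation). Then conjugate(T)·T := involute(reverse(T))·T lies in Z^×, the invertible center. -/
open CliffordAlgebra

noncomputable section

variable {n : ℕ} (Q : QuadraticForm ℝ (Fin n → ℝ))

/-- `Γ^{0̄3̄} ⊆ B` for `n ≥ 4`: if conjugation by `T` preserves the set of elements
fixed by Clifford conjugation, then `involute(reverse(T)) * T` is an invertible
central element. -/
theorem stmt10 (hQ : DiagQ Q) (hn : 4 ≤ n) (T : (CliffordAlgebra Q)ˣ)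
    (h : ∀ U : CliffordAlgebra Q, involute (reverse (Q := Q) U) = U →
      involute (reverse (Q := Q)
          ((↑T : CliffordAlgebra Q) * U * (↑T⁻¹ : CliffordAlgebra Q))) =
        (↑T : CliffordAlgebra Q) * U * (↑T⁻¹ : CliffordAlgebra Q)) :
    involute (reverse (Q := Q) (↑T : CliffordAlgebra Q)) * ↑T ∈
        Subalgebra.center ℝ (CliffordAlgebra Q) ∧
      IsUnit (involute (reverse (Q := Q) (↑T : CliffordAlgebra Q)) * ↑T) := by
  obtain ⟨hQ1, hQ2⟩ := hQ
  set conj : CliffordAlgebra Q → CliffordAlgebra Q :=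
    fun x => involute (reverse (Q := Q) x) with hconjdef
  have conj_mul : ∀ x y : CliffordAlgebra Q, conj (x * y) = conj y * conj x := by
    intro x y
    simp [hconjdef, reverse.map_mul, map_mul]
  have conj_one : conj 1 = 1 := by simp [hconjdef]
  set t : CliffordAlgebra Q := (↑T : CliffordAlgebra Q) with ht
  set ti : CliffordAlgebra Q := (↑T⁻¹ : CliffordAlgebra Q) with hti
  have htti : t * ti = 1 := T.mul_inv ▸ rfl
  have htit : ti * t = 1 := T.inv_mul ▸ rfl
  set S : CliffordAlgebra Q := conj t * t with hS
  -- S commutes with every conj-fixed element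
  have hcomm : ∀ U : CliffordAlgebra Q, conj U = U → S * U = U * S := by
    intro U hU
    have h1 : conj (t * U * ti) = t * U * ti := h U hU
    have h2 : conj ti * (U * conj t) = t * U * ti := by
      conv_lhs => rw [← hU]
      rw [← conj_mul t U, ← conj_mul (t * U) ti]
      exact h1
    have h3 : conj t * (conj ti * (U * conj t)) * t = conj t * (t * U * ti) * t := by
      rw [h2]
    have hl : conj t * (conj ti * (U * conj t)) * t = U * S := by
      have hcc : conj t * conj ti = 1 := by rw [← conj_mul, htit, conj_one]
      calc conj t * (conj ti * (U * conj t)) * t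
          = (conj t * conj ti) * (U * (conj t * t)) := by noncomm_ring
        _ = U * S := by rw [hcc, hS, one_mul]
    have hr : conj t * (t * U * ti) * t = S * U := by
      calc conj t * (t * U * ti) * t
          = (conj t * t) * U * (ti * t) := by noncomm_ring
        _ = S * U := by rw [htit, hS, mul_one]
    rw [← hr, ← h3, hl]
  -- basic relations
  have sq : ∀ a : Fin n, egen Q a * egen Q a
      = (Q (Pi.single a 1)) • (1 : CliffordAlgebra Q) := by
    intro a
    rw [egen, ι_sq_scalar, Algebra.algebraMap_eq_smul_one]
  have anti : ∀ a b : Fin n, a ≠ b →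
      egen Q a * egen Q b = -(egen Q b * egen Q a) := by
    intro a b hab
    have h0 := ι_mul_ι_add_swap (Q := Q) (Pi.single a 1) (Pi.single b 1)
    rw [hQ2 a b hab, map_zero] at h0
    rw [egen, egen]
    exact eq_neg_of_add_eq_zero_left h0
  have conj_egen : ∀ a : Fin n, conj (egen Q a) = -(egen Q a) := by
    intro a
    simp [hconjdef, egen, reverse_ι, involute_ι]
  have conj_neg : ∀ x : CliffordAlgebra Q, conj (-x) = -(conj x) := by
    intro x; simp [hconjdef]
  -- 3-fold reversal
  have rev3 : ∀ x y z : Fin n, x ≠ y → x ≠ z → y ≠ z →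
      egen Q z * (egen Q y * egen Q x) = -(egen Q x * (egen Q y * egen Q z)) := by
    intro x y z hxy hxz hyz
    have h1 : egen Q y * egen Q x = -(egen Q x * egen Q y) := anti y x hxy.symm
    have h2 : egen Q z * egen Q x = -(egen Q x * egen Q z) := anti z x hxz.symm
    have h3 : egen Q z * egen Q y = -(egen Q y * egen Q z) := anti z y hyz.symm
    calc egen Q z * (egen Q y * egen Q x)
        = (egen Q z * egen Q y) * egen Q x := by rw [mul_assoc]
      _ = -((egen Q y * egen Q z) * egen Q x) := by rw [h3]; noncomm_ring
      _ = -(egen Q y * (egen Q z * egen Q x)) := by rw [mul_assoc]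
      _ = (egen Q y * (egen Q x * egen Q z)) := by rw [h2]; noncomm_ring
      _ = (egen Q y * egen Q x) * egen Q z := by rw [mul_assoc]
      _ = -(egen Q x * (egen Q y * egen Q z)) := by rw [h1]; noncomm_ring
  -- S commutes with every generator
  have hgen : ∀ a : Fin n, S * egen Q a = egen Q a * S := by
    intro a
    -- pick b c d distinct from a and from each other
    obtain ⟨b, hb⟩ := Finset.card_pos.mp (show 0 < (Finset.univ.erase a).card by
      rw [Finset.card_erase_of_mem (Finset.mem_univ a), Finset.card_univ, Fintype.card_fin]
      omega)
    obtain ⟨c, hc⟩ := Finset.card_pos.mp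
      (show 0 < ((Finset.univ.erase a).erase b).card by
        rw [Finset.card_erase_of_mem hb,
          Finset.card_erase_of_mem (Finset.mem_univ a), Finset.card_univ,
          Fintype.card_fin]
        omega)
    obtain ⟨d, hd⟩ := Finset.card_pos.mp
      (show 0 < (((Finset.univ.erase a).erase b).erase c).card by
        rw [Finset.card_erase_of_mem hc, Finset.card_erase_of_mem hb,
          Finset.card_erase_of_mem (Finset.mem_univ a), Finset.card_univ,
          Fintype.card_fin]
        omega)
    have hba : b ≠ a := (Finset.mem_erase.mp hb).1
    have hcb : c ≠ b := (Finset.mem_erase.mp hc).1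
    have hca : c ≠ a := (Finset.mem_erase.mp (Finset.mem_erase.mp hc).2).1
    have hdc : d ≠ c := (Finset.mem_erase.mp hd).1
    have hdb : d ≠ b := (Finset.mem_erase.mp (Finset.mem_erase.mp hd).2).1
    have hda : d ≠ a :=
      (Finset.mem_erase.mp (Finset.mem_erase.mp (Finset.mem_erase.mp hd).2).2).1
    set ea := egen Q a
    set eb := egen Q b
    set ec := egen Q c
    set ed := egen Q d
    set V4 : CliffordAlgebra Q := ea * (eb * (ec * ed)) with hV4
    set V3 : CliffordAlgebra Q := ed * (ec * eb) with hV3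
    set q : ℝ := Q (Pi.single d 1) * (Q (Pi.single c 1) * Q (Pi.single b 1)) with hq
    have hqq : q * q = 1 := by
      rcases hQ1 b with h1 | h1 <;> rcases hQ1 c with h2 | h2 <;>
        rcases hQ1 d with h3 | h3 <;> rw [hq, h1, h2, h3] <;> norm_num
    have key : V4 * V3 = q • ea := by
      have e1 : V4 * V3 = ea * (eb * (ec * ((ed * ed) * (ec * eb)))) := by
        rw [hV4, hV3]; noncomm_ring
      rw [e1, sq d]
      simp only [smul_mul_assoc, mul_smul_comm, one_mul]
      rw [← mul_assoc ec ec eb, sq c]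
      simp only [smul_mul_assoc, mul_smul_comm, one_mul, smul_smul]
      rw [sq b]
      simp only [smul_mul_assoc, mul_smul_comm, mul_one, smul_smul]
      congr 1
      rw [hq]; ring
    have hea : ea = q • (V4 * V3) := by
      rw [key, smul_smul, hqq, one_smul]
    -- conj-fixedness of V3
    have hV3fix : conj V3 = V3 := by
      have e2 : conj V3 = -(eb * (ec * ed)) := by
        rw [hV3, conj_mul, conj_mul, conj_egen, conj_egen, conj_egen]
        noncomm_ring
      rw [e2, ← rev3 b c d hcb.symm (Ne.symm hdb) (Ne.symm hdc), hV3]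
    -- conj-fixedness of V4
    have hV4fix : conj V4 = V4 := by
      have e3 : conj V4 = ((ed * ec) * eb) * ea := by
        rw [hV4, conj_mul, conj_mul, conj_mul, conj_egen, conj_egen, conj_egen,
          conj_egen]
        noncomm_ring
      have e4 : ((ed * ec) * eb) * ea = V4 := by
        have r1 : ed * (ec * eb) = -(eb * (ec * ed)) :=
          rev3 b c d hcb.symm (Ne.symm hdb) (Ne.symm hdc)
        have r2 : ed * ea = -(ea * ed) := anti d a hda
        have r3 : ec * ea = -(ea * ec) := anti c a hca
        have r4 : eb * ea = -(ea * eb) := anti b a hba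
        calc ((ed * ec) * eb) * ea
            = (ed * (ec * eb)) * ea := by noncomm_ring
          _ = -((eb * (ec * ed)) * ea) := by rw [r1]; noncomm_ring
          _ = -(eb * (ec * (ed * ea))) := by noncomm_ring
          _ = (eb * (ec * (ea * ed))) := by rw [r2]; noncomm_ring
          _ = (eb * ((ec * ea) * ed)) := by noncomm_ring
          _ = -(eb * ((ea * ec) * ed)) := by rw [r3]; noncomm_ring
          _ = -((eb * ea) * (ec * ed)) := by noncomm_ring
          _ = (ea * eb) * (ec * ed) := by rw [r4]; noncomm_ring
          _ = V4 := by rw [hV4]; noncomm_ring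
      rw [e3, e4]
    have c4 := hcomm V4 hV4fix
    have c3 := hcomm V3 hV3fix
    calc S * ea = S * (q • (V4 * V3)) := by rw [← hea]
      _ = q • (S * V4 * V3) := by rw [mul_smul_comm]; noncomm_ring
      _ = q • (V4 * S * V3) := by rw [c4]
      _ = q • (V4 * (S * V3)) := by rw [mul_assoc]
      _ = q • (V4 * V3 * S) := by rw [c3]; noncomm_ring
      _ = (q • (V4 * V3)) * S := by rw [smul_mul_assoc]
      _ = ea * S := by rw [← hea]
  constructor
  · rw [Subalgebra.mem_center_iff]
    intro x
    induction x using CliffordAlgebra.induction with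
    | algebraMap r => exact Algebra.commutes r S
    | ι m =>
      have hm : ι Q m = ∑ i : Fin n, m i • egen Q i := by
        conv_lhs => rw [← Finset.univ_sum_single m]
        rw [map_sum]
        congr 1; ext i
        rw [egen, ← map_smul]
        congr 1
        rw [← Pi.single_smul, smul_eq_mul, mul_one]
      rw [hm, Finset.sum_mul, Finset.mul_sum]
      congr 1; ext i
      rw [smul_mul_assoc, mul_smul_comm, hgen i]
    | mul x y hx hy =>
      calc x * y * S = x * (y * S) := by rw [mul_assoc]
        _ = x * (S * y) := by rw [hy]
        _ = (x * S) * y := (mul_assoc x S y).symm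
        _ = (S * x) * y := by rw [hx]
        _ = S * (x * y) := mul_assoc S x y
    | add x y hx hy =>
      rw [add_mul, mul_add, hx, hy]
  · have hu1 : IsUnit (conj t) := by
      refine ⟨⟨conj t, conj ti, ?_, ?_⟩, rfl⟩
      · rw [← conj_mul, htit, conj_one]
      · rw [← conj_mul, htti, conj_one]
    exact hu1.mul T.isUnit
end
end

section
/- In a Clifford algebra with n ≤ 3 generators and nondegenerate form, every invertible element T satisfies involute(reverse(T))·T ∈ Z^×, i.e. the group B equals all of C^×. -/
/-!
Clifford conjugation `star x = involute (reverse x)` is an anti-involution, so `y = star T * T`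
satisfies `star y = y`, and `y` is a unit as a product of units. The ordered monomials `e_s`
span the algebra and `star e_s = (-1)^(k(k+1)/2) e_s` with `k = |s|`. Hence for `n ≤ 3` the
conjugation-fixed elements are spanned by `1` and, when `n = 3`, by the pseudoscalar
`e_1 e_2 e_3`, which is central because in odd dimension each generator anticommutes with an
even number of its factors.
-/

open CliffordAlgebra

noncomputable section

variable {n : ℕ} (Q : QuadraticForm ℝ (Fin n → ℝ))

section

variable {Q}

open Finset

theorem DiagQ.pairwise_isOrtho (hQ : DiagQ Q) :
    Pairwise fun a b : Fin n => Q.IsOrtho (Pi.single a 1) (Pi.single b 1) := by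
  intro a b hab
  have h := hQ.2 a b hab
  rw [QuadraticMap.polar, sub_sub, sub_eq_zero] at h
  exact QuadraticMap.isOrtho_def.2 h

theorem ι_eq_sum_smul_egen (v : Fin n → ℝ) : ι Q v = ∑ d, v d • egen Q d := by
  simp_rw [egen, ← map_smul, ← Pi.single_smul, smul_eq_mul, mul_one, ← map_sum,
    univ_sum_single]

theorem eProd_empty : eProd Q ∅ = 1 := by
  simp [eProd]

theorem eProd_insert_of_lt {a : Fin n} {s : Finset (Fin n)} (h : ∀ x ∈ s, a < x) :
    eProd Q (insert a s) = egen Q a * eProd Q s := by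
  rw [eProd, sort_insert (· ≤ ·) (fun x hx => (h x hx).le) fun ha => lt_irrefl a (h a ha)]
  simp [eProd]

theorem mem_center_of_forall_egen_mul_eq {x : CliffordAlgebra Q}
    (h : ∀ d, egen Q d * x = x * egen Q d) : x ∈ Subalgebra.center ℝ (CliffordAlgebra Q) := by
  have hι : ∀ v, ι Q v * x = x * ι Q v := fun v => by
    simp only [ι_eq_sum_smul_egen, sum_mul, mul_sum, smul_mul_assoc,
      mul_smul_comm, h]
  rw [Subalgebra.mem_center_iff]
  intro g
  induction g using CliffordAlgebra.induction with
  | algebraMap r => exact Algebra.commutes r x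
  | ι v => exact hι v
  | mul g₁ g₂ h₁ h₂ => rw [mul_assoc, h₂, ← mul_assoc, h₁, mul_assoc]
  | add g₁ g₂ h₁ h₂ => rw [add_mul, mul_add, h₁, h₂]

theorem exists_egen_mul_eProd_eq_smul
    (hQ : Pairwise fun a b : Fin n => Q.IsOrtho (Pi.single a 1) (Pi.single b 1))
    (a : Fin n) (s : Finset (Fin n)) :
    ∃ c : ℝ, egen Q a * eProd Q s = c • eProd Q (symmDiff s {a}) := by
  induction s using induction_on_min with
  | empty =>
    have hsymm : symmDiff (∅ : Finset (Fin n)) {a} = insert a ∅ := by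
      ext x
      simp [mem_symmDiff]
    refine ⟨1, ?_⟩
    rw [one_smul, hsymm, eProd_insert_of_lt (by simp), eProd_empty]
  | insert b t hbt ih =>
    rw [eProd_insert_of_lt hbt]
    rcases lt_trichotomy a b with hab | rfl | hba
    · have hat : ∀ x ∈ insert b t, a < x := by
        simp only [mem_insert, forall_eq_or_imp]
        exact ⟨hab, fun x hx => hab.trans (hbt x hx)⟩
      have hsymm : symmDiff (insert b t) {a} = insert a (insert b t) := by
        ext x
        simp only [mem_symmDiff, mem_insert, mem_singleton]
        grind
      refine ⟨1, ?_⟩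
      rw [one_smul, hsymm, eProd_insert_of_lt hat, eProd_insert_of_lt hbt]
    · have hsymm : symmDiff (insert a t) {a} = t := by
        ext x
        simp only [mem_symmDiff, mem_insert, mem_singleton]
        grind
      refine ⟨Q (Pi.single a 1), ?_⟩
      rw [hsymm, ← mul_assoc, egen, ι_sq_scalar, Algebra.smul_def]
    · obtain ⟨c, hc⟩ := ih
      have hbt' : ∀ x ∈ symmDiff t {a}, b < x := by
        simp only [mem_symmDiff, mem_singleton]
        grind
      have hsymm : symmDiff (insert b t) {a} = insert b (symmDiff t {a}) := by
        ext x
        simp only [mem_symmDiff, mem_insert, mem_singleton]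
        grind
      refine ⟨-c, ?_⟩
      rw [egen, egen, ι_mul_ι_mul_of_isOrtho _ (hQ hba.ne'), ← egen, ← egen, hc, hsymm,
        eProd_insert_of_lt hbt', mul_smul_comm, neg_smul]

theorem eProd_mul_egen
    (hQ : Pairwise fun a b : Fin n => Q.IsOrtho (Pi.single a 1) (Pi.single b 1))
    (a : Fin n) (s : Finset (Fin n)) :
    eProd Q s * egen Q a = (-1 : ℝ) ^ (s.erase a).card • (egen Q a * eProd Q s) := by
  induction s using induction_on_min with
  | empty => simp [eProd_empty]
  | insert b t hbt ih =>
    have hb : b ∉ t := fun hb => lt_irrefl b (hbt b hb)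
    rw [eProd_insert_of_lt hbt, mul_assoc, ih, mul_smul_comm]
    by_cases hab : b = a
    · subst hab
      rw [erase_insert hb, erase_eq_of_notMem hb]
    · have hb' : b ∉ t.erase a := fun h => hb (mem_of_mem_erase h)
      rw [erase_insert_of_ne hab, card_insert_of_notMem hb', egen, egen,
        ι_mul_ι_mul_of_isOrtho _ (hQ (Ne.symm hab)), pow_succ, mul_neg_one, neg_smul, smul_neg,
        neg_neg]

theorem star_eProd
    (hQ : Pairwise fun a b : Fin n => Q.IsOrtho (Pi.single a 1) (Pi.single b 1))
    (s : Finset (Fin n)) :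
    star (eProd Q s) = (-1 : ℝ) ^ (s.card + 1).choose 2 • eProd Q s := by
  induction s using induction_on_min with
  | empty => simp [eProd_empty]
  | insert a s has ih =>
    have ha : a ∉ s := fun ha => lt_irrefl a (has a ha)
    have hsign : (-1 : ℝ) ^ (s.card + 1 + 1).choose 2 =
        -((-1) ^ (s.card + 1).choose 2 * (-1) ^ s.card) := by
      rw [Nat.choose_succ_succ', Nat.choose_one_right, pow_add, pow_succ]
      ring
    rw [eProd_insert_of_lt has, star_mul, ih, egen, star_ι, ← egen, card_insert_of_notMem ha,
      mul_neg, smul_mul_assoc, eProd_mul_egen hQ, erase_eq_of_notMem ha, smul_smul, hsign,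
      neg_smul]

theorem eProd_univ_mem_center
    (hQ : Pairwise fun a b : Fin n => Q.IsOrtho (Pi.single a 1) (Pi.single b 1)) (hn : Odd n) :
    eProd Q univ ∈ Subalgebra.center ℝ (CliffordAlgebra Q) := by
  refine mem_center_of_forall_egen_mul_eq fun d => ?_
  have hcard : Even (univ.erase d).card := by
    rw [card_erase_of_mem (mem_univ d), card_univ, Fintype.card_fin]
    exact Nat.Odd.sub_odd hn odd_one
  rw [eProd_mul_egen hQ, hcard.neg_one_pow, one_smul]

theorem egen_mul_mem_span_range_eProd
    (hQ : Pairwise fun a b : Fin n => Q.IsOrtho (Pi.single a 1) (Pi.single b 1)) (a : Fin n)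
    {x : CliffordAlgebra Q} (hx : x ∈ Submodule.span ℝ (Set.range (eProd Q))) :
    egen Q a * x ∈ Submodule.span ℝ (Set.range (eProd Q)) := by
  induction hx using Submodule.span_induction with
  | mem y hy =>
    obtain ⟨s, rfl⟩ := hy
    obtain ⟨c, hc⟩ := exists_egen_mul_eProd_eq_smul hQ a s
    rw [hc]
    exact Submodule.smul_mem _ c (Submodule.subset_span ⟨_, rfl⟩)
  | zero => rw [mul_zero]; exact zero_mem _
  | add y z _ _ hy hz => rw [mul_add]; exact add_mem hy hz
  | smul r y _ hy => rw [mul_smul_comm]; exact Submodule.smul_mem _ r hy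

theorem span_range_eProd
    (hQ : Pairwise fun a b : Fin n => Q.IsOrtho (Pi.single a 1) (Pi.single b 1)) :
    Submodule.span ℝ (Set.range (eProd Q)) = ⊤ := by
  rw [eq_top_iff]
  rintro x -
  induction x using CliffordAlgebra.left_induction with
  | algebraMap r =>
    rw [Algebra.algebraMap_eq_smul_one, ← eProd_empty]
    exact Submodule.smul_mem _ r (Submodule.subset_span ⟨∅, rfl⟩)
  | add x y hx hy => exact add_mem hx hy
  | ι_mul x v hx =>
    rw [ι_eq_sum_smul_egen, sum_mul]
    refine Submodule.sum_mem _ fun d _ => ?_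
    rw [smul_mul_assoc]
    exact Submodule.smul_mem _ _ (egen_mul_mem_span_range_eProd hQ d hx)

theorem eProd_add_star_mem_center
    (hQ : Pairwise fun a b : Fin n => Q.IsOrtho (Pi.single a 1) (Pi.single b 1)) (hn : n ≤ 3)
    (s : Finset (Fin n)) :
    eProd Q s + star (eProd Q s) ∈ Subalgebra.center ℝ (CliffordAlgebra Q) := by
  have hs : s.card ≤ 3 := (card_le_univ s).trans (by simpa using hn)
  rw [star_eProd hQ]
  interval_cases h : s.card
  · rw [card_eq_zero.1 h, eProd_empty]
    norm_num
  · norm_num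
  · norm_num [Nat.choose]
  · have hn3 : n = 3 := le_antisymm hn (by simpa [h] using card_le_univ s)
    have hsu : s = univ := eq_univ_of_card s (by simp [h, hn3])
    have hcenter := eProd_univ_mem_center hQ (hn3 ▸ by decide : Odd n)
    subst hsu
    norm_num [Nat.choose]
    exact add_mem hcenter hcenter

theorem add_star_mem_center
    (hQ : Pairwise fun a b : Fin n => Q.IsOrtho (Pi.single a 1) (Pi.single b 1)) (hn : n ≤ 3)
    (x : CliffordAlgebra Q) : x + star x ∈ Subalgebra.center ℝ (CliffordAlgebra Q) := by
  have hx : x ∈ Submodule.span ℝ (Set.range (eProd Q)) := span_range_eProd hQ ▸ Submodule.mem_top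
  induction hx using Submodule.span_induction with
  | mem y hy =>
    obtain ⟨s, rfl⟩ := hy
    exact eProd_add_star_mem_center hQ hn s
  | zero => rw [star_zero, add_zero]; exact zero_mem _
  | add y z _ _ hy hz => rw [star_add, add_add_add_comm]; exact add_mem hy hz
  | smul r y _ hy => rw [CliffordAlgebra.star_smul, ← smul_add]; exact Subalgebra.smul_mem _ hy r

theorem mem_center_of_star_eq_self
    (hQ : Pairwise fun a b : Fin n => Q.IsOrtho (Pi.single a 1) (Pi.single b 1)) (hn : n ≤ 3)
    {x : CliffordAlgebra Q} (hx : star x = x) : x ∈ Subalgebra.center ℝ (CliffordAlgebra Q) := by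
  have h := Subalgebra.smul_mem _ (add_star_mem_center hQ hn x) (2⁻¹ : ℝ)
  rwa [hx, ← two_smul ℝ x, smul_smul, inv_mul_cancel₀ two_ne_zero, one_smul] at h

end

/-- For `n ≤ 3` the group `B` is all of `C^×`: for every invertible `T`,
`involute(reverse(T)) * T` is an invertible central element. -/
theorem stmt11 (hQ : DiagQ Q) (hn : n ≤ 3) (T : (CliffordAlgebra Q)ˣ) :
    involute (reverse (Q := Q) (↑T : CliffordAlgebra Q)) * ↑T ∈
        Subalgebra.center ℝ (CliffordAlgebra Q) ∧
      IsUnit (involute (reverse (Q := Q) (↑T : CliffordAlgebra Q)) * ↑T) := by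
  rw [← star_def']
  refine ⟨mem_center_of_star_eq_self hQ.pairwise_isOrtho hn ?_, T.isUnit.star.mul T.isUnit⟩
  rw [star_mul, star_star]
end
end

section
/- In a Clifford algebra with n = 4 generators, the element S = 1 + 2 e_{123} is invertible, satisfies reverse(S)·S = 1 − 4(e_{123})² ∈ C^{×0}, but S is neither even nor odd (nor a central multiple thereof). Hence A ≠ Q for n = 4. -/
open CliffordAlgebra

noncomputable section

variable {n : ℕ} (Q : QuadraticForm ℝ (Fin n → ℝ))

section helpers
variable {A : Type*} [Ring A] [Algebra ℝ A]

omit [Algebra ℝ A] in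
lemma swap3 {a b c : A} (hba : b*a = -(a*b)) (hca : c*a = -(a*c)) (hcb : c*b = -(b*c)) :
    c*(b*a) = -(a*b*c) := by
  calc c*(b*a) = -(c*(a*b)) := by rw [hba, mul_neg]
    _ = -((c*a)*b) := by rw [mul_assoc]
    _ = (a*c)*b := by rw [hca]; simp
    _ = a*(c*b) := by rw [mul_assoc]
    _ = -(a*(b*c)) := by rw [hcb, mul_neg]
    _ = -(a*b*c) := by rw [mul_assoc]

lemma sq3 {a b c : A} {α β γ : ℝ}
    (ha : a*a = algebraMap ℝ A α) (hb : b*b = algebraMap ℝ A β) (hc : c*c = algebraMap ℝ A γ)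
    (hba : b*a = -(a*b)) (hca : c*a = -(a*c)) (hcb : c*b = -(b*c)) :
    (a*b*c)*(a*b*c) = algebraMap ℝ A (-(α*β*γ)) := by
  have h1 : (a*b*c)*(a*b*c) = a*(b*((c*a)*(b*c))) := by simp [mul_assoc]
  rw [h1, hca]
  have h2 : a*(b*(-(a*c)*(b*c))) = -(a*((b*a)*(c*(b*c)))) := by
    simp [mul_assoc, mul_neg, neg_mul]
  rw [h2, hba]
  have h3 : -(a*(-(a*b)*(c*(b*c)))) = (a*a)*(b*((c*b)*c)) := by
    simp [mul_assoc, mul_neg, neg_mul]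
  rw [h3, hcb]
  have h4 : (a*a)*(b*(-(b*c)*c)) = -((a*a)*((b*b)*(c*c))) := by
    simp [mul_assoc, mul_neg, neg_mul]
  rw [h4, ha, hb, hc, ← map_mul, ← map_mul, ← map_neg]
  congr 1; ring

omit [Algebra ℝ A] in
lemma swapd {a b c d : A} (h1 : d*a = -(a*d)) (h2 : d*b = -(b*d)) (h3 : d*c = -(c*d)) :
    (a*b*c)*d = -(d*(a*b*c)) := by
  have h1' : a*d = -(d*a) := by rw [h1, neg_neg]
  have h2' : b*d = -(d*b) := by rw [h2, neg_neg]
  have h3' : c*d = -(d*c) := by rw [h3, neg_neg]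
  calc (a*b*c)*d = a*(b*(c*d)) := by simp [mul_assoc]
    _ = -(a*(b*(d*c))) := by rw [h3']; simp [mul_neg]
    _ = -(a*((b*d)*c)) := by rw [← mul_assoc b d c]
    _ = a*((d*b)*c) := by rw [h2']; simp [mul_neg, neg_mul, neg_neg]
    _ = (a*d)*(b*c) := by simp [mul_assoc]
    _ = -((d*a)*(b*c)) := by rw [h1']; simp [neg_mul]
    _ = -(d*(a*b*c)) := by simp [mul_assoc]

end helpers

/-- For `n = 4`, the element `S = 1 + 2 e₁e₂e₃` is invertible with scalar norm
`reverse(S) * S = 1 - 4 (e₁e₂e₃)²`, yet `S ∉ Z^×(C^{×(0)} ∪ C^{×(1)})`.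
Hence `A ≠ Q` for `n = 4`. -/
theorem stmt19 (Q : QuadraticForm ℝ (Fin 4 → ℝ)) (hQ : DiagQ Q) :
    let S : CliffordAlgebra Q := 1 + 2 * (egen Q 0 * egen Q 1 * egen Q 2)
    IsUnit S ∧
      reverse (Q := Q) S * S = 1 - 4 * (egen Q 0 * egen Q 1 * egen Q 2) ^ 2 ∧
      (∃ r : ℝ, r ≠ 0 ∧ reverse (Q := Q) S * S = algebraMap ℝ (CliffordAlgebra Q) r) ∧
      S ∉ Pset Q := by
  obtain ⟨hdiag, hpolar⟩ := hQ
  intro S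
  haveI : Invertible (2 : ℝ) := invertibleOfNonzero (by norm_num)
  have hsq : ∀ i : Fin 4,
      egen Q i * egen Q i = algebraMap ℝ (CliffordAlgebra Q) (Q (Pi.single i 1)) :=
    fun i => ι_sq_scalar Q _
  have hsw : ∀ i j : Fin 4, i ≠ j → egen Q i * egen Q j = -(egen Q j * egen Q i) := by
    intro i j hij
    have h := ι_mul_ι_add_swap (Q := Q) (Pi.single i 1) (Pi.single j 1)
    rw [hpolar i j hij, map_zero] at h
    exact eq_neg_of_add_eq_zero_left h
  have hrevE : ∀ i : Fin 4, reverse (Q := Q) (egen Q i) = egen Q i := fun i => reverse_ι _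
  have hinvE : ∀ i : Fin 4, involute (Q := Q) (egen Q i) = -(egen Q i) := fun i => involute_ι _
  set P : CliffordAlgebra Q := egen Q 0 * egen Q 1 * egen Q 2 with hPdef
  set ε : ℝ := -(Q (Pi.single 0 1) * Q (Pi.single 1 1) * Q (Pi.single 2 1)) with hε
  have hP2 : P * P = algebraMap ℝ (CliffordAlgebra Q) ε :=
    sq3 (hsq 0) (hsq 1) (hsq 2) (hsw 1 0 (by decide)) (hsw 2 0 (by decide)) (hsw 2 1 (by decide))
  have hεpm : ε = 1 ∨ ε = -1 := by
    rcases hdiag 0 with h0 | h0 <;> rcases hdiag 1 with h1 | h1 <;>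
      rcases hdiag 2 with h2 | h2 <;> rw [hε, h0, h1, h2] <;> norm_num
  set r : ℝ := 1 - 4 * ε with hrdef
  have hr : r ≠ 0 := by rcases hεpm with h | h <;> rw [hrdef, h] <;> norm_num
  have hS : S = 1 + 2 * P := rfl
  have hrevP : reverse (Q := Q) P = -P := by
    rw [hPdef, reverse.map_mul, reverse.map_mul, hrevE, hrevE, hrevE]
    exact swap3 (hsw 1 0 (by decide)) (hsw 2 0 (by decide)) (hsw 2 1 (by decide))
  have hinvP : involute (Q := Q) P = -P := by
    rw [hPdef, map_mul, map_mul, hinvE, hinvE, hinvE]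
    simp [mul_neg, neg_mul]
  have hrevS : reverse (Q := Q) S = 1 - 2 * P := by
    rw [hS, map_add, reverse.map_one, two_mul, map_add, hrevP]
    noncomm_ring
  have hinvS : involute (Q := Q) S = 1 - 2 * P := by
    rw [hS, map_add, map_one, two_mul, map_add, hinvP]
    noncomm_ring
  have hmulTS : (1 - 2 * P) * S = algebraMap ℝ (CliffordAlgebra Q) r := by
    have h : (1 - 2 * P) * S = 1 - 4 * (P * P) := by rw [hS]; noncomm_ring
    rw [h, hP2, hrdef, map_sub, map_mul, map_one, map_ofNat]
  have hmulST : S * (1 - 2 * P) = algebraMap ℝ (CliffordAlgebra Q) r := by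
    have h : S * (1 - 2 * P) = 1 - 4 * (P * P) := by rw [hS]; noncomm_ring
    rw [h, hP2, hrdef, map_sub, map_mul, map_one, map_ofNat]
  set T : CliffordAlgebra Q := algebraMap ℝ (CliffordAlgebra Q) r⁻¹ * (1 - 2 * P) with hTdef
  have hST1 : S * T = 1 := by
    rw [hTdef, ← mul_assoc, ← Algebra.commutes r⁻¹ S, mul_assoc, hmulST, ← map_mul,
      inv_mul_cancel₀ hr, map_one]
  have hTS1 : T * S = 1 := by
    rw [hTdef, mul_assoc, hmulTS, ← map_mul, inv_mul_cancel₀ hr, map_one]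
  refine ⟨⟨⟨S, T, hST1, hTS1⟩, rfl⟩, ?_, ⟨r, hr, ?_⟩, ?_⟩
  · rw [hrevS, hS, sq]; noncomm_ring
  · rw [hrevS, hmulTS]
  · rintro ⟨W, T₀, hWc, hWu, hT₀eo, hT₀u, hSWT⟩
    obtain ⟨u, hu⟩ := hWu
    obtain ⟨v, hv⟩ := hT₀u
    have hSuv : S = ↑(u * v) := by rw [hSWT, Units.val_mul, hu, hv]
    have hTinv : T = ↑(u * v)⁻¹ := by
      refine (Units.inv_eq_of_mul_eq_one_right ?_).symm
      rw [← hSuv]; exact hST1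
    have hTeq : T = ↑v⁻¹ * ↑u⁻¹ := by rw [hTinv, mul_inv_rev, Units.val_mul]
    have huinv_c : (↑u⁻¹ : CliffordAlgebra Q) ∈ Subalgebra.center ℝ (CliffordAlgebra Q) := by
      rw [Subalgebra.mem_center_iff] at hWc ⊢
      intro y
      have huy : (↑u : CliffordAlgebra Q) * y = y * ↑u := by rw [hu]; exact (hWc y).symm
      calc y * ↑u⁻¹ = ↑u⁻¹ * ↑u * (y * ↑u⁻¹) := by rw [Units.inv_mul, one_mul]
        _ = ↑u⁻¹ * ((↑u * y) * ↑u⁻¹) := by noncomm_ring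
        _ = ↑u⁻¹ * ((y * ↑u) * ↑u⁻¹) := by rw [huy]
        _ = ↑u⁻¹ * y * (↑u * ↑u⁻¹) := by noncomm_ring
        _ = ↑u⁻¹ * y := by rw [Units.mul_inv, mul_one]
    have hinvW_c : involute (Q := Q) W ∈ Subalgebra.center ℝ (CliffordAlgebra Q) := by
      rw [Subalgebra.mem_center_iff] at hWc ⊢
      intro y
      simpa [map_mul, involute_involute] using congrArg (involute (Q := Q)) (hWc (involute y))
    have hXc : involute (Q := Q) S * T ∈ Subalgebra.center ℝ (CliffordAlgebra Q) := by
      have hiS : involute (Q := Q) S = involute (Q := Q) W * involute (Q := Q) T₀ := by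
        rw [hSWT, map_mul]
      rcases hT₀eo with h | h
      · have hX : involute (Q := Q) S * T = involute (Q := Q) W * ↑u⁻¹ := by
          rw [hiS, involute_eq_of_mem_even h, hTeq, ← hv, mul_assoc,
            Units.mul_inv_cancel_left]
        rw [hX]
        exact mul_mem hinvW_c huinv_c
      · have hX : involute (Q := Q) S * T = -(involute (Q := Q) W * ↑u⁻¹) := by
          rw [hiS, involute_eq_of_mem_odd h, hTeq, ← hv]
          simp only [mul_neg, neg_mul]
          rw [mul_assoc, Units.mul_inv_cancel_left]
        rw [hX]
        exact neg_mem (mul_mem hinvW_c huinv_c)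
    have hsq2c : (1 - 2 * P) * (1 - 2 * P) ∈ Subalgebra.center ℝ (CliffordAlgebra Q) := by
      have hX : involute (Q := Q) S * T
          = algebraMap ℝ (CliffordAlgebra Q) r⁻¹ * ((1 - 2 * P) * (1 - 2 * P)) := by
        rw [hinvS, hTdef, ← mul_assoc, ← Algebra.commutes r⁻¹ (1 - 2*P), mul_assoc]
      have h2 : algebraMap ℝ (CliffordAlgebra Q) r * (involute (Q := Q) S * T)
          = (1 - 2 * P) * (1 - 2 * P) := by
        rw [hX, ← mul_assoc, ← map_mul, mul_inv_cancel₀ hr, map_one, one_mul]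
      exact h2 ▸ mul_mem (Subalgebra.algebraMap_mem _ r) hXc
    have hPc : P ∈ Subalgebra.center ℝ (CliffordAlgebra Q) := by
      have h3 : (1 : CliffordAlgebra Q) + algebraMap ℝ (CliffordAlgebra Q) (4*ε)
          - (1 - 2 * P) * (1 - 2 * P) ∈ Subalgebra.center ℝ (CliffordAlgebra Q) :=
        sub_mem (add_mem (one_mem _) (Subalgebra.algebraMap_mem _ _)) hsq2c
      have h4 : (4:ℝ)⁻¹ • ((1 : CliffordAlgebra Q) + algebraMap ℝ (CliffordAlgebra Q) (4*ε)
          - (1 - 2 * P) * (1 - 2 * P)) = P := by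
        have h5 : (1 - 2 * P) * (1 - 2 * P) = 1 - 4 * P + 4 * (P * P) := by noncomm_ring
        have h6 : (1 : CliffordAlgebra Q) + algebraMap ℝ (CliffordAlgebra Q) (4*ε)
            - (1 - 2 * P) * (1 - 2 * P) = 4 * P := by
          rw [h5, hP2, map_mul, map_ofNat]; noncomm_ring
        rw [h6, show ((4:CliffordAlgebra Q) * P = (4:ℝ) • P) from by
          rw [Algebra.smul_def, map_ofNat], smul_smul]
        norm_num
      exact h4 ▸ Subalgebra.smul_mem _ h3 _
    have hcomm : egen Q 3 * P = P * egen Q 3 := Subalgebra.mem_center_iff.mp hPc _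
    have hanti : P * egen Q 3 = -(egen Q 3 * P) := by
      rw [hPdef]
      exact swapd (hsw 3 0 (by decide)) (hsw 3 1 (by decide)) (hsw 3 2 (by decide))
    have h0 : egen Q 3 * P = 0 := by
      have h : egen Q 3 * P = -(egen Q 3 * P) := hcomm.trans hanti
      have h2 : (2:ℝ) • (egen Q 3 * P) = 0 := by
        rw [two_smul]
        nth_rewrite 1 [h]
        exact neg_add_cancel _
      exact (smul_eq_zero.mp h2).resolve_left (by norm_num)
    have he3 : egen Q 3 = (0 : CliffordAlgebra Q) := by
      have h : (egen Q 3 * P) * P = 0 := by rw [h0, zero_mul]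
      rw [mul_assoc, hP2, ← Algebra.commutes ε (egen Q 3), ← Algebra.smul_def] at h
      rcases smul_eq_zero.mp h with h' | h'
      · rcases hεpm with he | he <;> rw [he] at h' <;> norm_num at h'
      · exact h'
    have hq3 : Q (Pi.single (3 : Fin 4) 1) = 0 := by
      have h := hsq 3
      rw [he3, mul_zero] at h
      exact ((algebraMap ℝ (CliffordAlgebra Q)).injective
        (h.symm.trans (map_zero (algebraMap ℝ (CliffordAlgebra Q))).symm))
    rcases hdiag 3 with h | h <;> rw [hq3] at h <;> norm_num at h
end
end
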